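/- There exists a tripartite no-signaling box P(a,b,c|x,y,z) with inputs x, y, z ∈ {1,2,3} and outcomes a, b, c ∈ {−1,+1} (in fact a local deterministic box) such that I_AB + I_AC = 10, where I_AB = ⟨A_1B_1⟩ − ⟨A_1B_2⟩ − ⟨A_1B_3⟩ + ⟨A_2B_1⟩ + ⟨A_2B_2⟩ − ⟨A_2B_3⟩ + ⟨A_3B_1⟩ + ⟨A_3B_2⟩ + ⟨A_3B_3⟩ with ⟨A_xB_y⟩ = Σ_{a,b,c} ab·P(a,b,c|x,y,z), and I_AC is the same expression with Bob's outcome b replaced by Charlie's outcome c. Hence the no-signaling monogamy relation I_AB + I_AC ≤ 10 is tight. -/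

import Mathlib

/-!
Every local deterministic box is no-signaling, and its correlators factorize as
`⟨A_x B_y⟩ = f(x) g(y)`. Alice answering `+1` always and Bob answering `+1, +1, -1` attains
`I_AB = 5`, the classical bound. Giving Charlie Bob's strategy turns `I_AC` into a copy of
`I_AB`, so both expressions are saturated at once and `I_AB + I_AC = 10`.
-/

/-- The two-element set of outcomes `{−1, +1}` (as a subtype of `ℤ`). -/
abbrev Sgn : Type := ({-1, 1} : Finset ℤ)

/-- A tripartite no-signaling box with inputs `x, y, z ∈ {1,2,3}` and `±1`-valued
outcomes: nonnegative, normalized, and such that the marginal distribution of the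
outcomes of any subset of the parties is independent of the inputs of the
remaining parties. -/
structure NSBox3 where
  P : Fin 3 → Fin 3 → Fin 3 → Sgn → Sgn → Sgn → ℝ
  nonneg : ∀ x y z a b c, 0 ≤ P x y z a b c
  normalized : ∀ x y z, ∑ a : Sgn, ∑ b : Sgn, ∑ c : Sgn, P x y z a b c = 1
  nsAB : ∀ x y z z' a b, ∑ c : Sgn, P x y z a b c = ∑ c : Sgn, P x y z' a b c
  nsAC : ∀ x y y' z a c, ∑ b : Sgn, P x y z a b c = ∑ b : Sgn, P x y' z a b c
  nsBC : ∀ x x' y z b c, ∑ a : Sgn, P x y z a b c = ∑ a : Sgn, P x' y z a b c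
  nsA : ∀ x y y' z z' a,
    ∑ b : Sgn, ∑ c : Sgn, P x y z a b c = ∑ b : Sgn, ∑ c : Sgn, P x y' z' a b c
  nsB : ∀ x x' y z z' b,
    ∑ a : Sgn, ∑ c : Sgn, P x y z a b c = ∑ a : Sgn, ∑ c : Sgn, P x' y z' a b c
  nsC : ∀ x x' y y' z c,
    ∑ a : Sgn, ∑ b : Sgn, P x y z a b c = ∑ a : Sgn, ∑ b : Sgn, P x' y' z a b c

/-- The Alice–Bob correlator `⟨A_x B_y⟩ = Σ_{a,b,c} ab·P(a,b,c|x,y,z)`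
(independent of `z` by no-signaling, here evaluated at `z = 1`). -/
def NSBox3.corrAB (B : NSBox3) (x y : Fin 3) : ℝ :=
  ∑ a : Sgn, ∑ b : Sgn, ∑ c : Sgn, (((a : ℤ) * (b : ℤ) : ℤ) : ℝ) * B.P x y 0 a b c

/-- The Alice–Charlie correlator `⟨A_x C_z⟩ = Σ_{a,b,c} ac·P(a,b,c|x,y,z)`
(independent of `y` by no-signaling, here evaluated at `y = 1`). -/
def NSBox3.corrAC (B : NSBox3) (x z : Fin 3) : ℝ :=
  ∑ a : Sgn, ∑ b : Sgn, ∑ c : Sgn, (((a : ℤ) * (c : ℤ) : ℤ) : ℝ) * B.P x 0 z a b c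

/-- The Alice–Bob XOR-game Bell expression `I_AB`. -/
def NSBox3.IAB (B : NSBox3) : ℝ :=
  B.corrAB 0 0 - B.corrAB 0 1 - B.corrAB 0 2
    + B.corrAB 1 0 + B.corrAB 1 1 - B.corrAB 1 2
    + B.corrAB 2 0 + B.corrAB 2 1 + B.corrAB 2 2

/-- The Alice–Charlie XOR-game Bell expression `I_AC`. -/
def NSBox3.IAC (B : NSBox3) : ℝ :=
  B.corrAC 0 0 - B.corrAC 0 1 - B.corrAC 0 2
    + B.corrAC 1 0 + B.corrAC 1 1 - B.corrAC 1 2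
    + B.corrAC 2 0 + B.corrAC 2 1 + B.corrAC 2 2

namespace NSBox3

noncomputable def deterministic (f g h : Fin 3 → Sgn) : NSBox3 where
  P x y z a b c :=
    (if a = f x then 1 else 0) * (if b = g y then 1 else 0) * (if c = h z then 1 else 0)
  nonneg _ _ _ _ _ _ := by positivity
  normalized _ _ _ := by simp only [← Finset.mul_sum, Fintype.sum_ite_eq', mul_one]
  nsAB _ _ _ _ _ _ := by simp only [← Finset.mul_sum, Fintype.sum_ite_eq', mul_one]
  nsAC _ _ _ _ _ _ := by
    simp only [← Finset.mul_sum, ← Finset.sum_mul, Fintype.sum_ite_eq', mul_one]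
  nsBC _ _ _ _ _ _ := by simp only [← Finset.sum_mul, Fintype.sum_ite_eq', one_mul]
  nsA _ _ _ _ _ _ := by simp only [← Finset.mul_sum, Fintype.sum_ite_eq', mul_one]
  nsB _ _ _ _ _ _ := by
    simp only [← Finset.mul_sum, ← Finset.sum_mul, Fintype.sum_ite_eq', mul_one, one_mul]
  nsC _ _ _ _ _ _ := by
    simp only [← Finset.mul_sum, ← Finset.sum_mul, Fintype.sum_ite_eq', mul_one, one_mul]

theorem deterministic_corrAB (f g h : Fin 3 → Sgn) (x y : Fin 3) :
    (deterministic f g h).corrAB x y = ((f x * g y : ℤ) : ℝ) := by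
  simp only [corrAB, deterministic, mul_ite, mul_one, mul_zero, Fintype.sum_ite_eq']

theorem deterministic_corrAC (f g h : Fin 3 → Sgn) (x z : Fin 3) :
    (deterministic f g h).corrAC x z = ((f x * h z : ℤ) : ℝ) := by
  simp only [corrAC, deterministic, mul_ite, mul_one, mul_zero, Fintype.sum_ite_eq']

theorem deterministic_IAC (f g h : Fin 3 → Sgn) :
    (deterministic f g h).IAC = (deterministic f h g).IAB := by
  simp only [IAC, IAB, deterministic_corrAB, deterministic_corrAC]

end NSBox3

def Sgn.one : Sgn := ⟨1, by simp⟩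

def Sgn.negOne : Sgn := ⟨-1, by simp⟩

theorem IAB_deterministic_eq_five (h : Fin 3 → Sgn) :
    (NSBox3.deterministic (fun _ => .one) ![.one, .one, .negOne] h).IAB = 5 := by
  simp only [NSBox3.IAB, NSBox3.deterministic_corrAB, Matrix.cons_val_zero, Matrix.cons_val_one,
    Matrix.cons_val_two, Matrix.tail_cons, Matrix.head_cons]
  norm_num [Sgn.one, Sgn.negOne]

/-- The no-signaling monogamy relation `I_AB + I_AC ≤ 10` is tight:
there is a tripartite no-signaling box — in fact a local deterministic box
`P(a,b,c|x,y,z) = [a = f x]·[b = g y]·[c = h z]` — with `I_AB + I_AC = 10`. -/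
theorem xor_game_ns_monogamy_tight :
    ∃ B : NSBox3,
      (∃ f g h : Fin 3 → Sgn, ∀ x y z a b c,
        B.P x y z a b c =
          (if a = f x then (1 : ℝ) else 0) * (if b = g y then (1 : ℝ) else 0)
            * (if c = h z then (1 : ℝ) else 0)) ∧
      B.IAB + B.IAC = 10 := by
  let alice : Fin 3 → Sgn := fun _ => .one
  let bob : Fin 3 → Sgn := ![.one, .one, .negOne]
  refine ⟨.deterministic alice bob bob, ⟨alice, bob, bob, fun _ _ _ _ _ _ => rfl⟩, ?_⟩
  rw [NSBox3.deterministic_IAC, IAB_deterministic_eq_five]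
  norm_num
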